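/- arXiv:2205.01345 — 4 statements merged into one kernel-verified Lean document; each statement's English description precedes it below -/
import Mathlib

section
/- There is a one-to-one correspondence between maximal independent sets of the Conflict Graph and realities (maximal branches): the map sending a maximal independent set I = {c₁,…,cₙ} to the union of past cones ⋃ past(cᵢ) is a bijection onto the set of realities, whose inverse sends a reality to its set of elements viewed as an independent set. -/
def ConflictFree {C : Type*} (conf : C → C → Prop) (B : Set C) : Prop :=
  ∀ x ∈ B, ∀ y ∈ B, x ≠ y → ¬ conf x y

def PastClosed {C : Type*} [PartialOrder C] (B : Set C) : Prop :=
  ∀ u ∈ B, ∀ v, u ≤ v → v ∈ B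

def IsBranch {C : Type*} [PartialOrder C] (conf : C → C → Prop) (B : Set C) : Prop :=
  ConflictFree conf B ∧ PastClosed B

/-- A reality is an inclusion-maximal branch. -/
def Reality {C : Type*} [PartialOrder C] (conf : C → C → Prop) (B : Set C) : Prop :=
  IsBranch conf B ∧ ∀ A : Set C, IsBranch conf A → B ⊆ A → A = B

def Past {C : Type*} [PartialOrder C] (c : C) : Set C := {y | c ≤ y}

/-- An independent set of the Conflict Graph: pairwise non-conflicting conflicts. -/
def Indep {C : Type*} (conf : C → C → Prop) (I : Set C) : Prop :=
  ∀ x ∈ I, ∀ y ∈ I, x ≠ y → ¬ conf x y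

/-- A maximal independent set of the Conflict Graph. -/
def MaxIndep {C : Type*} (conf : C → C → Prop) (I : Set C) : Prop :=
  Indep conf I ∧ ∀ J : Set C, Indep conf J → I ⊆ J → J = I

section Aux
variable {C : Type*} [PartialOrder C] (conf : C → C → Prop)

lemma branch_unionPast (hsymm : Symmetric conf)
    (hher : ∀ x y x' y', conf x y → x' ≤ x → y' ≤ y → conf x' y')
    (hpast : ∀ c : C, ConflictFree conf (Past c))
    {I : Set C} (hI : Indep conf I) :
    IsBranch conf (⋃ c ∈ I, Past c) := by
  constructor
  · intro x hx y hy hxy hconf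
    simp only [Set.mem_iUnion] at hx hy
    obtain ⟨c, hc, hcx⟩ := hx
    obtain ⟨d, hd, hdy⟩ := hy
    by_cases hcd : c = d
    · subst hcd
      exact hpast c x hcx y hdy hxy hconf
    · exact hI c hc d hd hcd (hher x y c d hconf hcx hdy)
  · intro u hu v huv
    simp only [Set.mem_iUnion] at hu ⊢
    obtain ⟨c, hc, hcu⟩ := hu
    exact ⟨c, hc, le_trans hcu huv⟩

lemma mem_unionPast {I : Set C} {c : C} (hc : c ∈ I) : c ∈ ⋃ c ∈ I, Past c := by
  simp only [Set.mem_iUnion]; exact ⟨c, hc, le_refl c⟩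

lemma insert_indep {A : Set C} (hA : ConflictFree conf A) {I : Set C}
    (hIA : I ⊆ A) {a : C} (ha : a ∈ A) : Indep conf (insert a I) := by
  intro x hx y hy hxy
  rcases hx with rfl | hx <;> rcases hy with rfl | hy
  · exact absurd rfl hxy
  · exact hA x ha y (hIA hy) hxy
  · exact hA x (hIA hx) y ha hxy
  · exact hA x (hIA hx) y (hIA hy) hxy

lemma maxIndep_unionPast_eq {I : Set C} (hI : MaxIndep conf I)
    (hB : IsBranch conf (⋃ c ∈ I, Past c)) : (⋃ c ∈ I, Past c) = I := by
  apply Set.Subset.antisymm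
  · intro a ha
    have hsub : I ⊆ ⋃ c ∈ I, Past c := fun c hc => mem_unionPast hc
    have := hI.2 (insert a I) (insert_indep conf hB.1 hsub ha)
      (Set.subset_insert a I)
    rw [← this]; exact Set.mem_insert a I
  · intro c hc; exact mem_unionPast hc

lemma maxIndep_reality (hsymm : Symmetric conf)
    (hher : ∀ x y x' y', conf x y → x' ≤ x → y' ≤ y → conf x' y')
    (hpast : ∀ c : C, ConflictFree conf (Past c))
    {I : Set C} (hI : MaxIndep conf I) : Reality conf I := by
  have hB := branch_unionPast conf hsymm hher hpast hI.1
  have heq := maxIndep_unionPast_eq conf hI hB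
  rw [heq] at hB
  refine ⟨hB, fun A hA hIA => ?_⟩
  apply Set.Subset.antisymm _ hIA
  intro a ha
  have := hI.2 (insert a I) (insert_indep conf hA.1 hIA ha) (Set.subset_insert a I)
  rw [← this]; exact Set.mem_insert a I

lemma reality_unionPast_eq {R : Set C} (hR : Reality conf R) :
    (⋃ c ∈ R, Past c) = R := by
  apply Set.Subset.antisymm
  · intro x hx
    simp only [Set.mem_iUnion] at hx
    obtain ⟨c, hc, hcx⟩ := hx
    exact hR.1.2 c hc x hcx
  · intro c hc; exact mem_unionPast hc

lemma reality_maxIndep (hsymm : Symmetric conf)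
    (hher : ∀ x y x' y', conf x y → x' ≤ x → y' ≤ y → conf x' y')
    (hpast : ∀ c : C, ConflictFree conf (Past c))
    {R : Set C} (hR : Reality conf R) : MaxIndep conf R := by
  refine ⟨hR.1.1, fun J hJ hRJ => ?_⟩
  have hB := branch_unionPast conf hsymm hher hpast hJ
  have hRB : R ⊆ ⋃ c ∈ J, Past c := fun c hc => mem_unionPast (hRJ hc)
  have := hR.2 _ hB hRB
  apply Set.Subset.antisymm _ hRJ
  intro j hj
  rw [← this]; exact mem_unionPast hj

end Aux

/-- The map sending a maximal independent set `I` of the Conflict Graph to the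
union of the past cones of its elements is a bijection onto the set of
realities, whose inverse sends a reality to its set of elements. -/

theorem maxIndep_equiv_reality
    {C : Type*} [Fintype C] [PartialOrder C]
    (conf : C → C → Prop) (hsymm : Symmetric conf)
    (hher : ∀ x y x' y', conf x y → x' ≤ x → y' ≤ y → conf x' y')
    (hpast : ∀ c : C, ConflictFree conf (Past c)) :
    Set.BijOn (fun I : Set C => ⋃ c ∈ I, Past c)
      {I : Set C | MaxIndep conf I} {R : Set C | Reality conf R} ∧
    ∀ R : Set C, Reality conf R → (⋃ c ∈ R, Past c) = R := by
  constructor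
  · refine ⟨?_, ?_, ?_⟩
    · intro I hI
      simp only [Set.mem_setOf_eq] at hI ⊢
      have hB := branch_unionPast conf hsymm hher hpast hI.1
      rw [maxIndep_unionPast_eq conf hI hB]
      exact maxIndep_reality conf hsymm hher hpast hI
    · intro I hI J hJ h
      have hI' := maxIndep_unionPast_eq conf hI
        (branch_unionPast conf hsymm hher hpast hI.1)
      have hJ' := maxIndep_unionPast_eq conf hJ
        (branch_unionPast conf hsymm hher hpast hJ.1)
      rw [← hI', ← hJ']; exact h
    · intro R hR
      exact ⟨R, reality_maxIndep conf hsymm hher hpast hR,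
        reality_unionPast_eq conf hR⟩
  · exact fun R hR => reality_unionPast_eq conf hR
end

section
/- Let θ ∈ (1/2, 1] and suppose the weight function w on conflicts satisfies monotonicity and consistency (pairwise conflicting transactions have total weight ≤ 1). Among the set of w-confirmed branches (branches B with w(B) ≥ θ, where w(∅)=1 ≥ θ may be assumed), there exists a unique maximal one under inclusion; equivalently the subDAG of the Branch DAG induced by confirmed branches has a unique leaf. -/
def ConflictFreeF {C : Type*} (conf : C → C → Prop) (B : Finset C) : Prop :=
  ∀ x ∈ B, ∀ y ∈ B, x ≠ y → ¬ conf x y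

def PastClosedF {C : Type*} [PartialOrder C] (B : Finset C) : Prop :=
  ∀ u ∈ B, ∀ v, u ≤ v → v ∈ B

def IsBranchF {C : Type*} [PartialOrder C] (conf : C → C → Prop) (B : Finset C) : Prop :=
  ConflictFreeF conf B ∧ PastClosedF B

noncomputable def branchWeight {C : Type*} (w : C → ℝ) (B : Finset C) : ℝ :=
  if h : B.Nonempty then B.inf' h w else 1

/-- A branch is `w`-confirmed if its weight is at least the threshold `θ`. -/
def Confirmed {C : Type*} [PartialOrder C] (conf : C → C → Prop) (w : C → ℝ)
    (θ : ℝ) (B : Finset C) : Prop :=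
  IsBranchF conf B ∧ θ ≤ branchWeight w B

/-- For a threshold `θ ∈ (1/2, 1]` and a monotone, consistent weight function,
there is a unique maximal `w`-confirmed branch (equivalently, the subDAG of the
Branch DAG induced by confirmed branches has a unique leaf). -/
theorem unique_maximal_confirmed_branch
    {C : Type*} [Fintype C] [PartialOrder C]
    (conf : C → C → Prop) (hsymm : Symmetric conf) (hirr : ∀ c, ¬ conf c c)
    (hher : ∀ x y x' y', conf x y → x' ≤ x → y' ≤ y → conf x' y')
    (w : C → ℝ) (h01 : ∀ x, w x ∈ Set.Icc (0 : ℝ) 1)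
    (hmono : ∀ x y : C, x ≤ y → w x ≤ w y)
    (hcons : ∀ S : Finset C, (∀ a ∈ S, ∀ b ∈ S, a ≠ b → conf a b) →
      ∑ x ∈ S, w x ≤ 1)
    (θ : ℝ) (hθ : θ ∈ Set.Ioc (1/2 : ℝ) 1) :
    ∃! M : Finset C, Confirmed conf w θ M ∧
      ∀ B : Finset C, Confirmed conf w θ B → M ⊆ B → B = M := by
  classical
  -- every element of a confirmed branch has weight ≥ θ
  have hElem : ∀ B : Finset C, Confirmed conf w θ B → ∀ x ∈ B, θ ≤ w x := by
    intro B hB x hx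
    have hne : B.Nonempty := ⟨x, hx⟩
    have := hB.2
    rw [branchWeight, dif_pos hne] at this
    exact this.trans (Finset.inf'_le _ hx)
  -- no two confirmed branches contain conflicting elements
  have hNoConf : ∀ B₁ B₂ : Finset C, Confirmed conf w θ B₁ → Confirmed conf w θ B₂ →
      ∀ x ∈ B₁, ∀ y ∈ B₂, ¬ conf x y := by
    intro B₁ B₂ h₁ h₂ x hx y hy hc
    have hxy : x ≠ y := by rintro rfl; exact hirr x hc
    have hsum := hcons {x, y} (by
      intro a ha b hb hab
      simp only [Finset.mem_insert, Finset.mem_singleton] at ha hb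
      rcases ha with rfl | rfl <;> rcases hb with rfl | rfl
      · exact absurd rfl hab
      · exact hc
      · exact hsymm hc
      · exact absurd rfl hab)
    rw [Finset.sum_insert (by simpa using hxy), Finset.sum_singleton] at hsum
    have h1 := hElem B₁ h₁ x hx
    have h2 := hElem B₂ h₂ y hy
    have : (1 : ℝ) < θ + θ := by linarith [hθ.1]
    linarith
  -- M is the union of all confirmed branches
  set T : Finset (Finset C) := Finset.univ.filter (fun B => Confirmed conf w θ B) with hT
  set M : Finset C := T.sup id with hM
  have hmemM : ∀ x, x ∈ M ↔ ∃ B, Confirmed conf w θ B ∧ x ∈ B := by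
    intro x
    simp [hM, Finset.mem_sup, hT, Finset.mem_filter]
  have hMconf : Confirmed conf w θ M := by
    refine ⟨⟨?_, ?_⟩, ?_⟩
    · intro x hx y hy hxy hc
      obtain ⟨B₁, hB₁, hxB₁⟩ := (hmemM x).1 hx
      obtain ⟨B₂, hB₂, hyB₂⟩ := (hmemM y).1 hy
      exact hNoConf B₁ B₂ hB₁ hB₂ x hxB₁ y hyB₂ hc
    · intro u hu v huv
      obtain ⟨B, hB, huB⟩ := (hmemM u).1 hu
      exact (hmemM v).2 ⟨B, hB, hB.1.2 u huB v huv⟩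
    · rw [branchWeight]
      split_ifs with hne
      · apply Finset.le_inf'
        intro x hx
        obtain ⟨B, hB, hxB⟩ := (hmemM x).1 hx
        exact hElem B hB x hxB
      · exact hθ.2
  have hsub : ∀ B, Confirmed conf w θ B → B ⊆ M := by
    intro B hB x hx
    exact (hmemM x).2 ⟨B, hB, hx⟩
  refine ⟨M, ⟨hMconf, fun B hB hMB => Finset.Subset.antisymm (hsub B hB) hMB⟩, ?_⟩
  intro M' ⟨hM'conf, hM'max⟩
  exact (hM'max M hMconf (hsub M' hM'conf)).symm
end

section
/- Let R be a reality of the Conflict Graph/DAG structure and define the R-ledger as the set of transactions whose past cone contains only conflicts belonging to R. Then the R-ledger is conflict-free: it contains no two conflicting transactions. -/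
/-- Two transactions are conflicting if their past cones (w.r.t. the spending
order `≤` of the Ledger DAG) contain directly conflicting transactions. -/
def Conflicting {L : Type*} [PartialOrder L] (dc : L → L → Prop) (x y : L) : Prop :=
  ∃ x₂ y₂, x ≤ x₂ ∧ y ≤ y₂ ∧ dc x₂ y₂

/-- The set of conflicts: transactions directly conflicting with another one. -/
def Conflicts {L : Type*} (dc : L → L → Prop) : Set L :=
  {x | ∃ y, y ≠ x ∧ dc x y}

/-- The `R`-ledger associated to a reality `R` is conflict-free. -/
theorem R_ledger_conflict_free
    {L : Type*} [Fintype L] [PartialOrder L]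
    (dc : L → L → Prop) (hsymm : Symmetric dc) (hirr : ∀ v, ¬ dc v v)
    (hpast : ∀ x y z : L, x ≤ y → x ≤ z → y ≠ z → ¬ Conflicting dc y z)
    (R : Set L)
    (hRsub : R ⊆ Conflicts dc)
    (hRcf : ∀ c₁ ∈ R, ∀ c₂ ∈ R, c₁ ≠ c₂ → ¬ Conflicting dc c₁ c₂)
    (hRpc : ∀ c₁ ∈ R, ∀ c₂ ∈ Conflicts dc, c₁ ≤ c₂ → c₂ ∈ R)
    (hRmax : ∀ R' : Set L, R' ⊆ Conflicts dc →
      (∀ c₁ ∈ R', ∀ c₂ ∈ R', c₁ ≠ c₂ → ¬ Conflicting dc c₁ c₂) →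
      (∀ c₁ ∈ R', ∀ c₂ ∈ Conflicts dc, c₁ ≤ c₂ → c₂ ∈ R') →
      R ⊆ R' → R' = R) :
    ∀ x ∈ {z : L | ∀ c ∈ Conflicts dc, z ≤ c → c ∈ R},
    ∀ y ∈ {z : L | ∀ c ∈ Conflicts dc, z ≤ c → c ∈ R},
      x ≠ y → ¬ Conflicting dc x y := by
  intro x hx y hy hxy hconf
  obtain ⟨x₂, y₂, hxx₂, hyy₂, hdc⟩ := hconf
  have hne : x₂ ≠ y₂ := fun h => hirr x₂ (h ▸ hdc)
  have hx₂C : x₂ ∈ Conflicts dc := ⟨y₂, hne.symm, hdc⟩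
  have hy₂C : y₂ ∈ Conflicts dc := ⟨x₂, hne, hsymm hdc⟩
  have hx₂R : x₂ ∈ R := hx x₂ hx₂C hxx₂
  have hy₂R : y₂ ∈ R := hy y₂ hy₂C hyy₂
  exact hRcf x₂ hx₂R y₂ hy₂R hne ⟨x₂, y₂, le_refl _, le_refl _, hdc⟩
end

section
/- In the 'minimal hash' weight assignment, any two directly conflicting transactions receive weights summing to at most 1: at most one member of each set of pairwise directly conflicting conflicts is assigned initial weight 1 (namely the one with minimal hash among its neighbours), and the resulting weight function is monotone along the ledger partial order. -/
/-- The "minimal hash" weight assignment: among a set of pairwise directly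
conflicting conflicts, at most one receives initial weight 1 (the one with
minimal hash among its Conflict-Graph neighbours), so the weights of pairwise
directly conflicting transactions sum to at most 1; moreover the propagated
weight function is monotone along the ledger partial order. -/
theorem minimal_hash_weight_consistent_and_monotone
    {L : Type*} [Fintype L] [PartialOrder L]
    [DecidableRel ((· ≤ ·) : L → L → Prop)]
    (conf : L → L → Prop) (hsymm : Symmetric conf) (hirr : ∀ v, ¬ conf v v)
    (hash : L → ℕ) (hhash : Function.Injective hash)
    (w0 w : L → ℝ)
    -- non-conflicts (and the genesis) get initial weight 1
    (hw0_nonconf : ∀ x : L, (¬ ∃ y, conf x y) → w0 x = 1)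
    -- a conflict whose hash is minimal in its closed Conflict-Graph
    -- neighbourhood gets initial weight 1
    (hw0_min : ∀ x y : L, conf x y → (∀ z, conf x z → hash x ≤ hash z) → w0 x = 1)
    -- a conflict which is not hash-minimal in its neighbourhood gets weight 0
    (hw0_notmin : ∀ x : L, (∃ z, conf x z ∧ hash z < hash x) → w0 x = 0)
    -- the weight is propagated through the Ledger DAG: `w x` is the minimum
    -- of the initial weights over the past cone of `x`
    (hw : ∀ x : L, w x =
      (Finset.univ.filter fun y => x ≤ y).inf' ⟨x, by simp⟩ w0) :
    (∀ x y : L, x ≤ y → w x ≤ w y) ∧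
    (∀ S : Finset L, 2 ≤ S.card →
      (∀ a ∈ S, ∀ b ∈ S, a ≠ b → conf a b) → ∑ a ∈ S, w a ≤ 1) := by
  -- every initial weight is 0 or 1
  have h01 : ∀ x : L, w0 x = 0 ∨ w0 x = 1 := by
    intro x
    by_cases hc : ∃ y, conf x y
    · obtain ⟨y, hy⟩ := hc
      by_cases hmin : ∀ z, conf x z → hash x ≤ hash z
      · exact Or.inr (hw0_min x y hy hmin)
      · push_neg at hmin
        obtain ⟨z, hz, hlt⟩ := hmin
        exact Or.inl (hw0_notmin x ⟨z, hz, hlt⟩)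
    · exact Or.inr (hw0_nonconf x hc)
  have hnn : ∀ x : L, (0:ℝ) ≤ w0 x := by
    intro x; rcases h01 x with h | h <;> rw [h] <;> norm_num
  have hmono : ∀ x y : L, x ≤ y → w x ≤ w y := by
    intro x y hxy
    rw [hw x, hw y]
    apply Finset.le_inf'
    intro b hb
    apply Finset.inf'_le
    simp only [Finset.mem_filter, Finset.mem_univ, true_and] at hb ⊢
    exact le_trans hxy hb
  refine ⟨hmono, ?_⟩
  intro S hcard hconf
  have hwle : ∀ a : L, w a ≤ w0 a := by
    intro a
    rw [hw a]
    apply Finset.inf'_le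
    simp
  have hwnn : ∀ a : L, (0:ℝ) ≤ w a := by
    intro a; rw [hw a]; exact Finset.le_inf' _ _ fun b _ => hnn b
  calc ∑ a ∈ S, w a ≤ ∑ a ∈ S, w0 a := Finset.sum_le_sum fun a _ => hwle a
    _ ≤ 1 := by
        classical
        -- at most one element of S has w0 = 1
        by_cases h : ∃ a ∈ S, w0 a = 1
        · obtain ⟨a, haS, ha1⟩ := h
          have hz : ∀ b ∈ S, b ≠ a → w0 b = 0 := by
            intro b hbS hba
            rcases h01 b with h0 | h1
            · exact h0
            · exfalso
              -- both a and b are hash-minimal in their neighbourhoods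
              have hab : conf a b := hconf a haS b hbS (Ne.symm hba)
              have hmina : ∀ z, conf a z → hash a ≤ hash z := by
                intro z hz'
                by_contra hlt
                push_neg at hlt
                have := hw0_notmin a ⟨z, hz', hlt⟩
                rw [this] at ha1; norm_num at ha1
              have hminb : ∀ z, conf b z → hash b ≤ hash z := by
                intro z hz'
                by_contra hlt
                push_neg at hlt
                have := hw0_notmin b ⟨z, hz', hlt⟩
                rw [this] at h1; norm_num at h1
              have h1' := hmina b hab
              have h2' := hminb a (hsymm hab)
              exact hba (hhash (le_antisymm h2' h1'))
          have : ∑ x ∈ S, w0 x = w0 a := by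
            rw [← Finset.add_sum_erase S w0 haS]
            rw [Finset.sum_eq_zero (fun b hb => hz b (Finset.mem_of_mem_erase hb)
              (Finset.ne_of_mem_erase hb))]
            ring
          rw [this, ha1]
        · push_neg at h
          have : ∑ x ∈ S, w0 x = 0 := Finset.sum_eq_zero fun b hb => by
            rcases h01 b with h0 | h1
            · exact h0
            · exact absurd h1 (h b hb)
          rw [this]; norm_num
end
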